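/- arXiv:1512.01820 — 2 statements merged into one kernel-verified Lean document; each statement's English description precedes it below -/
import Mathlib

section
/- The element x = (b²a² + b·a·√(b²a²+4q) + 2q)/(2q) is not a root of unity; that is, if x^k = 1 for a nonnegative integer k, then k = 0. -/
open Polynomial

theorem mon_eq (c : ℚ) (u v : ℕ) :
    (MvPolynomial.monomial (Finsupp.single 1 u + Finsupp.single 0 v) c : MvPolynomial (Fin 2) ℚ)
      = MvPolynomial.C c * MvPolynomial.X 1 ^ u * MvPolynomial.X 0 ^ v := by
  rw [MvPolynomial.X_pow_eq_monomial, MvPolynomial.X_pow_eq_monomial, MvPolynomial.C_apply,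
    MvPolynomial.monomial_mul, MvPolynomial.monomial_mul, mul_one, mul_one, zero_add]

set_option maxHeartbeats 1600000 in
theorem aux_trans :
    Transcendental ℚ
      ((algebraMap (MvPolynomial (Fin 2) ℚ) (FractionRing (MvPolynomial (Fin 2) ℚ))
          (MvPolynomial.X 1)) ^ 2 /
        algebraMap (MvPolynomial (Fin 2) ℚ) (FractionRing (MvPolynomial (Fin 2) ℚ))
          (MvPolynomial.X 0)) := by
  set R := MvPolynomial (Fin 2) ℚ with hR
  set K := FractionRing R with hK
  set g := algebraMap R K with hg
  have hginj : Function.Injective g := IsFractionRing.injective R K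
  have hcomp : algebraMap ℚ K = g.comp (MvPolynomial.C) := Subsingleton.elim _ _
  set A : K := g (MvPolynomial.X 1) with hA
  set B : K := g (MvPolynomial.X 0) with hB
  have hB0 : B ≠ 0 := fun h => MvPolynomial.X_ne_zero (R := ℚ) 0
    (hginj (by rw [← hB, h, map_zero]))
  rintro ⟨p, hp0, hpe⟩
  set d := p.natDegree with hd
  set P : MvPolynomial (Fin 2) ℚ := ∑ i ∈ Finset.range (d + 1),
    MvPolynomial.monomial (Finsupp.single 1 (2 * i) + Finsupp.single 0 (d - i)) (p.coeff i)
    with hP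
  have hgP : g P = B ^ d * Polynomial.aeval (A ^ 2 / B) p := by
    rw [Polynomial.aeval_def, Polynomial.eval₂_eq_sum_range, Finset.mul_sum, hP, map_sum]
    refine Finset.sum_congr rfl fun i hi => ?_
    have hid : i ≤ d := Nat.lt_succ_iff.mp (Finset.mem_range.mp hi)
    have key : B ^ d * (A ^ 2 / B) ^ i = A ^ (2 * i) * B ^ (d - i) := by
      rw [div_pow, ← pow_mul, pow_sub₀ B hB0 hid, mul_comm, div_mul_eq_mul_div, mul_div_assoc,
        div_eq_mul_inv]
    rw [mul_comm ((algebraMap ℚ K) (p.coeff i)), ← mul_assoc, key, mon_eq, map_mul, map_mul,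
      map_pow, map_pow, ← hA, ← hB, hcomp]
    simp only [RingHom.comp_apply]
    ring
  have hP0 : P = 0 := hginj (by rw [hgP, hpe, mul_zero, map_zero])
  have hlead : p.coeff d = 0 := by
    have hc := congrArg (MvPolynomial.coeff (Finsupp.single 1 (2 * d))) hP0
    rw [hP, MvPolynomial.coeff_sum, MvPolynomial.coeff_zero] at hc
    rw [Finset.sum_eq_single d] at hc
    · rwa [MvPolynomial.coeff_monomial, if_pos (by simp)] at hc
    · intro j hj hjd
      rw [MvPolynomial.coeff_monomial, if_neg]
      intro h
      have h1 := DFunLike.congr_fun h (1 : Fin 2)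
      simp [Finsupp.single_apply] at h1
      omega
    · exact fun h => absurd (Finset.self_mem_range_succ d) h
  exact hp0 (Polynomial.leadingCoeff_eq_zero.mp hlead)

local notation "RR" => MvPolynomial (Fin 2) ℚ
local notation "KK" => FractionRing (MvPolynomial (Fin 2) ℚ)
local notation "LL" => AlgebraicClosure (FractionRing (MvPolynomial (Fin 2) ℚ))

set_option maxHeartbeats 1600000 in
/-- In an algebraic closure of ℚ(q,a) (q, a algebraically independent
indeterminates realized as the two variables of a multivariate polynomial ring),
with a fixed square root s of b²a²+4q, the element
x = (b²a² + b·a·s + 2q)/(2q) is not a root of unity: x^k = 1 implies k = 0. -/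
theorem stmt0 (b : ℕ) (hb : 0 < b)
    (q a s x : AlgebraicClosure (FractionRing (MvPolynomial (Fin 2) ℚ)))
    (hq : q = algebraMap (FractionRing (MvPolynomial (Fin 2) ℚ))
        (AlgebraicClosure (FractionRing (MvPolynomial (Fin 2) ℚ)))
        (algebraMap (MvPolynomial (Fin 2) ℚ) (FractionRing (MvPolynomial (Fin 2) ℚ))
          (MvPolynomial.X 0)))
    (ha : a = algebraMap (FractionRing (MvPolynomial (Fin 2) ℚ))
        (AlgebraicClosure (FractionRing (MvPolynomial (Fin 2) ℚ)))
        (algebraMap (MvPolynomial (Fin 2) ℚ) (FractionRing (MvPolynomial (Fin 2) ℚ))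
          (MvPolynomial.X 1)))
    (hs : s ^ 2 = (b : AlgebraicClosure (FractionRing (MvPolynomial (Fin 2) ℚ))) ^ 2 * a ^ 2
        + 4 * q)
    (hx : x = ((b : AlgebraicClosure (FractionRing (MvPolynomial (Fin 2) ℚ))) ^ 2 * a ^ 2
        + (b : AlgebraicClosure (FractionRing (MvPolynomial (Fin 2) ℚ))) * a * s + 2 * q)
        / (2 * q)) :
    ∀ k : ℕ, x ^ k = 1 → k = 0 := by
  intro k hk
  by_contra hk0
  have hkpos : 0 < k := Nat.pos_of_ne_zero hk0
  have hfinj : Function.Injective (algebraMap KK LL) := (algebraMap KK LL).injective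
  have hginj : Function.Injective (algebraMap RR KK) := IsFractionRing.injective RR KK
  have hq0 : q ≠ 0 := by
    rw [hq, map_ne_zero_iff _ hfinj, map_ne_zero_iff _ hginj]
    exact MvPolynomial.X_ne_zero 0
  have hb0 : ((b : LL)) ≠ 0 := Nat.cast_ne_zero.mpr hb.ne'
  have h2 : (2 : LL) ≠ 0 := two_ne_zero
  have hxy : x * (((b : LL) ^ 2 * a ^ 2 - (b : LL) * a * s + 2 * q) / (2 * q)) = 1 := by
    rw [hx]
    field_simp
    linear_combination (-((b : LL) ^ 2 * a ^ 2)) * hs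
  have hinv : x⁻¹ = ((b : LL) ^ 2 * a ^ 2 - (b : LL) * a * s + 2 * q) / (2 * q) :=
    inv_eq_of_mul_eq_one_right hxy
  have hsum : x + x⁻¹ = (b : LL) ^ 2 * (a ^ 2 / q) + 2 := by
    rw [hinv, hx]
    field_simp
    ring
  have halgx : IsAlgebraic ℚ x := by
    refine ⟨Polynomial.X ^ k - Polynomial.C 1, Polynomial.X_pow_sub_C_ne_zero hkpos 1, ?_⟩
    simp [hk]
  have halgt : IsAlgebraic ℚ (a ^ 2 / q) := by
    have h1 : IsIntegral ℚ x := isAlgebraic_iff_isIntegral.mp halgx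
    have h2' : IsIntegral ℚ x⁻¹ := isAlgebraic_iff_isIntegral.mp halgx.inv
    have h2int : IsIntegral ℚ (2 : LL) := by
      have : (2 : LL) = algebraMap ℚ LL 2 := by simp
      rw [this]; exact isIntegral_algebraMap
    have hbint : IsIntegral ℚ (((b : LL)) ^ 2)⁻¹ := by
      have : (((b : LL)) ^ 2)⁻¹ = algebraMap ℚ LL (((b : ℚ) ^ 2)⁻¹) := by
        rw [map_inv₀, map_pow, map_natCast]
      rw [this]; exact isIntegral_algebraMap
    have heq : a ^ 2 / q = (((b : LL)) ^ 2)⁻¹ * ((x + x⁻¹) - 2) := by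
      rw [hsum]
      field_simp
      ring
    rw [heq]
    exact isAlgebraic_iff_isIntegral.mpr (hbint.mul ((h1.add h2').sub h2int))
  have heq2 : a ^ 2 / q = algebraMap KK LL
      ((algebraMap RR KK (MvPolynomial.X 1)) ^ 2 / algebraMap RR KK (MvPolynomial.X 0)) := by
    rw [ha, hq, map_div₀, map_pow]
  rw [heq2] at halgt
  exact aux_trans (halgt.of_ringHom_of_comp_eq (RingHom.id ℚ) (algebraMap KK LL)
    Function.surjective_id hfinj (Subsingleton.elim _ _))
end

section
/- The sum over all b-multipartitions λ of n of the square of the number of standard Young b-tableaux of shape λ equals bⁿ·n!. -/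
/-- A Young b-tableau of shape λ = (λ¹,...,λᵇ) with n boxes: a bijection from
{1,...,n} to the boxes of the b-tuple of Young diagrams. -/
abbrev MPTableau (b n : ℕ) (lam : Fin b → YoungDiagram) :=
  Fin n ≃ ((j : Fin b) × {c : ℕ × ℕ // c ∈ lam j})

/-- Standard: in each component, entries strictly increase along rows and columns
(equivalently, the entry map is strictly monotone for the componentwise order on
the cells of each component). -/
def IsStandard {b n : ℕ} {lam : Fin b → YoungDiagram} (T : MPTableau b n lam) : Prop :=
  ∀ (j : Fin b) (c c' : {c : ℕ × ℕ // c ∈ lam j}),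
    c.1.1 ≤ c'.1.1 → c.1.2 ≤ c'.1.2 → c ≠ c' → T.symm ⟨j, c⟩ < T.symm ⟨j, c'⟩

/-- m̄_{j-1} = m₁ + ... + m_{j-1}, the left endpoint of the block M_j. -/
def psum {b : ℕ} (lam : Fin b → YoungDiagram) (j : Fin b) : ℕ :=
  ∑ j' ∈ Finset.univ.filter (fun j' => j' < j), (lam j').card

/-- τ ∈ YT₀: for each j, the entries of the j-th component are exactly the block
M_j = {m̄_{j-1}+1, ..., m̄_j}. -/
def InBlocks {b n : ℕ} {lam : Fin b → YoungDiagram} (T : MPTableau b n lam) : Prop :=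
  ∀ i : Fin n, psum lam (T i).1 ≤ (i : ℕ) ∧ (i : ℕ) < psum lam (T i).1 + (lam (T i).1).card

/-- The action of w ∈ Σ_n on tableaux by permuting entries: the box holding entry i in
w·τ is the box holding w⁻¹(i) in τ. -/
def act {b n : ℕ} {lam : Fin b → YoungDiagram} (w : Equiv.Perm (Fin n))
    (T : MPTableau b n lam) : MPTableau b n lam :=
  (w⁻¹ : Equiv.Perm (Fin n)).trans T

/-- w ∈ W^α: the restriction of w to each block M_j is increasing. -/
def Wincr {b : ℕ} (n : ℕ) (lam : Fin b → YoungDiagram) (w : Equiv.Perm (Fin n)) : Prop :=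
  ∀ (j : Fin b) (i i' : Fin n),
    (psum lam j ≤ (i : ℕ) ∧ (i : ℕ) < psum lam j + (lam j).card) →
    (psum lam j ≤ (i' : ℕ) ∧ (i' : ℕ) < psum lam j + (lam j).card) →
    i < i' → w i < w i'

/-!
A `b`-tuple of Young diagrams is a `b`-differential poset: a diagram has exactly one more outer
corner than inner corners, so a tuple has `b` more upper covers than lower covers, and by
modularity two distinct tuples have a common upper cover iff they have a common lower cover.
Standard tableaux are natural labelings of the cells, and removing the largest entry gives
`f λ = ∑_{μ ⋖ λ} f μ`. In an `r`-differential poset this recursion forces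
`∑_{ν ⋗ λ} f ν = r (|λ| + 1) f λ` (induction on `|λ|`, comparing up-down with down-up paths),
whence `∑_{|ν| = n + 1} (f ν)² = r (n + 1) ∑_{|λ| = n} (f λ)²`.
-/

open Finset

open Classical in
theorem sum_filter_sum_filter_eq_sum_mul_card {β γ : Type*} [Fintype β] [Fintype γ]
    (p : β → Prop) (q : γ → β → Prop) (f : γ → ℕ) :
    ∑ z with p z, ∑ w with q w z, f w = ∑ w, f w * #{z | p z ∧ q w z} := by
  simp_rw [sum_filter (p := fun w => q w _)]
  rw [sum_comm]
  simp_rw [← sum_filter, filter_filter, sum_const, smul_eq_mul, mul_comm]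

section DifferentialPoset

variable {α : ℕ → Type*} [∀ n, Fintype (α n)]

open Classical in
/-- Stanley's `r`-differential posets, given by their rank levels `α n` and the covering relation
between consecutive levels. -/
structure IsDifferential (cov : ∀ n, α n → α (n + 1) → Prop) (r : ℕ) : Prop where
  zero : ∀ x w : α 0, #{z | cov 0 x z ∧ cov 0 w z} = if x = w then r else 0
  succ : ∀ n (x w : α (n + 1)),
    #{z | cov (n + 1) x z ∧ cov (n + 1) w z} = #{y | cov n y x ∧ cov n y w} + if x = w then r else 0

namespace IsDifferential

variable {cov : ∀ n, α n → α (n + 1) → Prop} {r : ℕ} (hcov : IsDifferential cov r)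
  {e : ∀ n, α n → ℕ}
include hcov

open Classical in
theorem sum_cov_eq (he : ∀ n z, e (n + 1) z = ∑ w with cov n w z, e n w) (n : ℕ) (x : α n) :
    ∑ z with cov n x z, e (n + 1) z = r * (n + 1) * e n x := by
  have expand : ∀ m (x : α m),
      ∑ z with cov m x z, e (m + 1) z = ∑ w, e m w * #{z | cov m x z ∧ cov m w z} := fun m x => by
    simp_rw [he, sum_filter_sum_filter_eq_sum_mul_card]
  induction n with
  | zero => simp [expand, hcov.zero, mul_ite, mul_comm]
  | succ n ih =>
    calc ∑ z with cov (n + 1) x z, e (n + 2) z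
        = ∑ w, e (n + 1) w * #{y | cov n y x ∧ cov n y w} + r * e (n + 1) x := by
          simp [expand, hcov.succ, mul_add, sum_add_distrib, mul_ite, mul_comm]
      _ = ∑ y with cov n y x, ∑ w with cov n y w, e (n + 1) w + r * e (n + 1) x := by
          rw [sum_filter_sum_filter_eq_sum_mul_card]
      _ = r * (n + 1 + 1) * e (n + 1) x := by
          simp_rw [ih, ← mul_sum, ← he]; ring

open Classical in
theorem sum_sq_eq (he : ∀ n z, e (n + 1) z = ∑ w with cov n w z, e n w) (n : ℕ) :
    ∑ x, e n x ^ 2 = r ^ n * n.factorial * ∑ x, e 0 x ^ 2 := by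
  induction n with
  | zero => simp
  | succ n ih =>
    calc ∑ z, e (n + 1) z ^ 2 = ∑ z, ∑ w with cov n w z, e n w * e (n + 1) z := by
          simp_rw [sq, he, sum_mul]
      _ = ∑ w, e n w * ∑ z with cov n w z, e (n + 1) z := by
          simp_rw [sum_filter, mul_sum, mul_ite, mul_zero]
          exact sum_comm
      _ = r ^ (n + 1) * (n + 1).factorial * ∑ x, e 0 x ^ 2 := by
          simp_rw [hcov.sum_cov_eq he, mul_left_comm (e n _), ← sq, ← mul_sum, ih,
            Nat.factorial_succ]
          ring

end IsDifferential

end DifferentialPoset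

theorem natCard_covBy_and_covBy_eq_of_ne {L : Type*} [Lattice L] [IsModularLattice L] {x w : L}
    (h : x ≠ w) : Nat.card {z // x ⋖ z ∧ w ⋖ z} = Nat.card {y // y ⋖ x ∧ y ⋖ w} := by
  have eq_sup {z : L} (hz : x ⋖ z ∧ w ⋖ z) : x ⊔ w = z := hz.1.wcovBy.sup_eq hz.2.wcovBy h
  have eq_inf {y : L} (hy : y ⋖ x ∧ y ⋖ w) : x ⊓ w = y := hy.1.wcovBy.inf_eq hy.2.wcovBy h
  have : Subsingleton {z // x ⋖ z ∧ w ⋖ z} :=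
    ⟨fun a b => Subtype.ext ((eq_sup a.2).symm.trans (eq_sup b.2))⟩
  have : Subsingleton {y // y ⋖ x ∧ y ⋖ w} :=
    ⟨fun a b => Subtype.ext ((eq_inf a.2).symm.trans (eq_inf b.2))⟩
  rcases isEmpty_or_nonempty {z // x ⋖ z ∧ w ⋖ z} with hup | ⟨⟨z, hz⟩⟩
  · have : IsEmpty {y // y ⋖ x ∧ y ⋖ w} := ⟨fun ⟨y, hy⟩ => hup.false
      ⟨x ⊔ w, by rw [← eq_inf hy] at hy; exact ⟨hy.2.sup_of_inf_right, hy.1.sup_of_inf_left⟩⟩⟩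
    simp only [Nat.card_of_isEmpty]
  · rw [← eq_sup hz] at hz
    rw [Nat.card_of_subsingleton (⟨x ⊔ w, by rwa [eq_sup hz]⟩ : {z // x ⋖ z ∧ w ⋖ z}),
      Nat.card_of_subsingleton (⟨x ⊓ w, hz.2.inf_of_sup_right, hz.1.inf_of_sup_left⟩ :
        {y // y ⋖ x ∧ y ⋖ w})]

namespace YoungDiagram

theorem card_strictMono : StrictMono YoungDiagram.card := fun _ _ h =>
  Finset.card_lt_card (cells_ssubset_iff.mpr h)

variable (μ : YoungDiagram)

def addCell (c : ℕ × ℕ) (hc : Minimal (· ∉ μ) c) : YoungDiagram where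
  cells := insert c μ.cells
  isLowerSet := by
    rw [Finset.coe_insert]
    rintro a b hab (rfl | hb)
    · rcases eq_or_lt_of_le hab with rfl | hlt
      · exact Set.mem_insert _ _
      · exact Set.mem_insert_of_mem _ (by_contra fun ha => not_lt_of_ge (hc.2 ha hab) hlt)
    · exact Set.mem_insert_of_mem _ (μ.isLowerSet hab hb)

def eraseCell (c : ℕ × ℕ) (hc : Maximal (· ∈ μ) c) : YoungDiagram where
  cells := μ.cells.erase c
  isLowerSet := by
    rw [Finset.coe_erase]
    exact μ.isLowerSet.erase fun b hb hcb => le_antisymm (hc.2 hb hcb) hcb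

variable {μ} {c : ℕ × ℕ}

@[simp]
theorem mem_addCell {hc : Minimal (· ∉ μ) c} {x : ℕ × ℕ} : x ∈ μ.addCell c hc ↔ x = c ∨ x ∈ μ :=
  Finset.mem_insert

@[simp]
theorem mem_eraseCell {hc : Maximal (· ∈ μ) c} {x : ℕ × ℕ} :
    x ∈ μ.eraseCell c hc ↔ x ≠ c ∧ x ∈ μ :=
  Finset.mem_erase

theorem covBy_addCell (hc : Minimal (· ∉ μ) c) : μ ⋖ μ.addCell c hc := by
  have hcard : (μ.addCell c hc).card = μ.card + 1 := Finset.card_insert_of_notMem hc.1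
  refine ⟨lt_of_le_of_ne (fun x hx => mem_addCell.2 (.inr hx)) fun h => hc.1 ?_, fun ρ h₁ h₂ => ?_⟩
  · rw [h]; exact mem_addCell.2 (.inl rfl)
  · have := card_strictMono h₁; have := card_strictMono h₂; omega

theorem eraseCell_covBy (hc : Maximal (· ∈ μ) c) : μ.eraseCell c hc ⋖ μ := by
  have hcard : (μ.eraseCell c hc).card + 1 = μ.card := Finset.card_erase_add_one hc.1
  refine ⟨lt_of_le_of_ne (fun x hx => (mem_eraseCell.1 hx).2) fun h => ?_, fun ρ h₁ h₂ => ?_⟩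
  · have hcμ := hc.1
    rw [← h] at hcμ
    simp at hcμ
  · have := card_strictMono h₁; have := card_strictMono h₂; omega

theorem exists_addCell_eq {ν : YoungDiagram} (h : μ ⋖ ν) :
    ∃ c hc, μ.addCell c hc = ν := by
  obtain ⟨c, hcν, hcμ⟩ := Set.exists_of_ssubset h.lt
  obtain ⟨c, hc⟩ := exists_minimal_of_wellFoundedLT (fun x => x ∈ ν ∧ x ∉ μ) ⟨c, hcν, hcμ⟩
  have hmin : Minimal (· ∉ μ) c :=
    ⟨hc.1.2, fun y hy hyc => hc.2 ⟨ν.isLowerSet hyc hc.1.1, hy⟩ hyc⟩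
  refine ⟨c, hmin, ((h.eq_or_eq (covBy_addCell hmin).le fun x hx => ?_).resolve_left
    (covBy_addCell hmin).ne')⟩
  rcases mem_addCell.1 hx with rfl | hx
  exacts [hc.1.1, h.le hx]

theorem exists_eraseCell_eq {ρ : YoungDiagram} (h : ρ ⋖ μ) :
    ∃ c hc, μ.eraseCell c hc = ρ := by
  obtain ⟨c, hc⟩ := Finset.exists_maximal (Finset.sdiff_nonempty.2 fun hsub =>
    h.lt.not_ge (cells_subset_iff.1 hsub))
  have hcμ : c ∈ μ ∧ c ∉ ρ := Finset.mem_sdiff.1 hc.1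
  have hmax : Maximal (· ∈ μ) c := ⟨hcμ.1, fun y hy hcy =>
    hc.2 (Finset.mem_sdiff.2 ⟨hy, fun hyρ => hcμ.2 (ρ.isLowerSet hcy hyρ)⟩) hcy⟩
  refine ⟨c, hmax, ((h.eq_or_eq (fun x hx => mem_eraseCell.2 ⟨?_, h.le hx⟩)
    (eraseCell_covBy hmax).le).resolve_right (eraseCell_covBy hmax).ne)⟩
  rintro rfl; exact hcμ.2 hx

theorem minimal_notMem_iff {c : ℕ × ℕ} :
    Minimal (· ∉ μ) c ↔ c.2 = μ.rowLen c.1 ∧ (c.1 = 0 ∨ μ.rowLen c.1 < μ.rowLen (c.1 - 1)) := by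
  obtain ⟨i, j⟩ := c
  simp only [Minimal, mem_iff_lt_rowLen, not_lt, Prod.forall, Prod.mk_le_mk, and_imp]
  constructor
  · rintro ⟨hj, hmin⟩
    have hj' := (hmin i (μ.rowLen i) le_rfl le_rfl hj).2
    refine ⟨by omega, or_iff_not_imp_left.2 fun hi => ?_⟩
    by_contra! hle
    have := (hmin (i - 1) j (le_trans hle hj) (by omega) le_rfl).1
    omega
  · rintro ⟨rfl, hi⟩
    refine ⟨le_rfl, fun a b hb ha hbj => ⟨?_, le_trans (μ.rowLen_anti a i ha) hb⟩⟩
    by_contra! hai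
    have := μ.rowLen_anti a (i - 1) (by omega)
    omega

theorem maximal_mem_iff {c : ℕ × ℕ} :
    Maximal (· ∈ μ) c ↔ c.2 + 1 = μ.rowLen c.1 ∧ μ.rowLen (c.1 + 1) < μ.rowLen c.1 := by
  obtain ⟨i, j⟩ := c
  simp only [Maximal, mem_iff_lt_rowLen, Prod.forall, Prod.mk_le_mk, and_imp]
  constructor
  · rintro ⟨hj, hmax⟩
    refine ⟨?_, ?_⟩
    · by_contra! hne
      have := (hmax i (j + 1) (by omega) le_rfl (by omega)).2
      omega
    · by_contra! hle
      have := (hmax (i + 1) j (by omega) (by omega) le_rfl).1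
      omega
  · rintro ⟨hj, hlt⟩
    refine ⟨by omega, fun a b hb hia hjb => ⟨?_, ?_⟩⟩
    · by_contra! hai
      have := μ.rowLen_anti (i + 1) a hai
      have := μ.rowLen_anti i a hia
      omega
    · have := μ.rowLen_anti i a hia
      omega

variable (μ : YoungDiagram)

noncomputable def addCellEquiv : {c // Minimal (· ∉ μ) c} ≃ {ν // μ ⋖ ν} :=
  Equiv.ofBijective (fun c => ⟨μ.addCell c c.2, covBy_addCell c.2⟩) <| by
    refine ⟨fun ⟨c, hc⟩ ⟨c', hc'⟩ heq => Subtype.ext ?_, fun ⟨ν, h⟩ => ?_⟩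
    · have heq : μ.addCell c hc = μ.addCell c' hc' := congrArg Subtype.val heq
      have : c ∈ μ.addCell c' hc' := heq ▸ mem_addCell.2 (.inl rfl)
      exact (mem_addCell.1 this).resolve_right hc.1
    · obtain ⟨c, hc, rfl⟩ := exists_addCell_eq h
      exact ⟨⟨c, hc⟩, rfl⟩

noncomputable def eraseCellEquiv : {c // Maximal (· ∈ μ) c} ≃ {ρ // ρ ⋖ μ} :=
  Equiv.ofBijective (fun c => ⟨μ.eraseCell c c.2, eraseCell_covBy c.2⟩) <| by
    refine ⟨fun ⟨c, hc⟩ ⟨c', hc'⟩ heq => Subtype.ext ?_, fun ⟨ρ, h⟩ => ?_⟩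
    · have heq : μ.eraseCell c hc = μ.eraseCell c' hc' := congrArg Subtype.val heq
      by_contra hne
      have : c ∈ μ.eraseCell c' hc' := mem_eraseCell.2 ⟨hne, hc.1⟩
      rw [← heq] at this
      exact (mem_eraseCell.1 this).1 rfl
    · obtain ⟨c, hc, rfl⟩ := exists_eraseCell_eq h
      exact ⟨⟨c, hc⟩, rfl⟩

/-- The outer corner in row `0` is always present; every other outer corner, in row `i + 1`,
sits below the inner corner ending row `i`. -/
noncomputable def optionMaximalEquivMinimal :
    Option {c // Maximal (· ∈ μ) c} ≃ {c // Minimal (· ∉ μ) c} :=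
  Equiv.ofBijective
    (fun c => c.elim ⟨(0, μ.rowLen 0), minimal_notMem_iff.2 ⟨rfl, .inl rfl⟩⟩
      fun c => ⟨(c.1.1 + 1, μ.rowLen (c.1.1 + 1)),
        minimal_notMem_iff.2 ⟨rfl, .inr (maximal_mem_iff.1 c.2).2⟩⟩) <| by
    refine ⟨?_, fun ⟨⟨i, j⟩, hc⟩ => ?_⟩
    · rintro (_ | ⟨⟨i, j⟩, hc⟩) (_ | ⟨⟨i', j'⟩, hc'⟩) heq <;>
        simp only [Option.elim, Subtype.mk.injEq, Prod.mk.injEq] at heq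
      · rfl
      · omega
      · omega
      · have hj : j + 1 = μ.rowLen i := (maximal_mem_iff.1 hc).1
        have hj' : j' + 1 = μ.rowLen i' := (maximal_mem_iff.1 hc').1
        obtain rfl : i = i' := by omega
        obtain rfl : j = j' := by omega
        rfl
    · obtain ⟨rfl, hi⟩ : j = μ.rowLen i ∧ (i = 0 ∨ μ.rowLen i < μ.rowLen (i - 1)) :=
        minimal_notMem_iff.1 hc
      rcases i with _ | i
      · exact ⟨none, rfl⟩
      · have hlt : μ.rowLen (i + 1) < μ.rowLen i := by simpa using hi
        have hj : μ.rowLen i - 1 + 1 = μ.rowLen i := by omega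
        exact ⟨some ⟨(i, μ.rowLen i - 1), maximal_mem_iff.2 ⟨hj, hlt⟩⟩, rfl⟩

instance : Finite {c // Maximal (· ∈ μ) c} :=
  Finite.of_injective (fun c => (⟨c.1, (mem_cells _).2 c.2.1⟩ : μ.cells)) fun _ _ h =>
    Subtype.ext (by simpa using h)

instance : Finite {ν // μ ⋖ ν} := .of_equiv _ (μ.optionMaximalEquivMinimal.trans μ.addCellEquiv)

instance : Finite {ρ // ρ ⋖ μ} := .of_equiv _ μ.eraseCellEquiv

theorem natCard_covBy_eq_natCard_covBy_add_one :
    Nat.card {ν // μ ⋖ ν} = Nat.card {ρ // ρ ⋖ μ} + 1 := by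
  rw [← Nat.card_congr μ.addCellEquiv, ← Nat.card_congr μ.optionMaximalEquivMinimal,
    Finite.card_option, Nat.card_congr μ.eraseCellEquiv]

theorem card_of_covBy {μ ν : YoungDiagram} (h : μ ⋖ ν) : ν.card = μ.card + 1 := by
  obtain ⟨c, hc, rfl⟩ := exists_addCell_eq h
  exact Finset.card_insert_of_notMem hc.1

theorem lt_card_of_mem {μ : YoungDiagram} {c : ℕ × ℕ} (hc : c ∈ μ) :
    c.1 < μ.card ∧ c.2 < μ.card := by
  have hcol : c.1 < μ.colLen 0 := mem_iff_lt_colLen.1 (μ.up_left_mem le_rfl (Nat.zero_le _) hc)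
  have hrow : c.2 < μ.rowLen 0 := mem_iff_lt_rowLen.1 (μ.up_left_mem (Nat.zero_le _) le_rfl hc)
  rw [colLen_eq_card] at hcol
  rw [rowLen_eq_card] at hrow
  exact ⟨hcol.trans_le (Finset.card_filter_le _ _), hrow.trans_le (Finset.card_filter_le _ _)⟩

end YoungDiagram

section Pi

variable {ι : Type*} [DecidableEq ι] {β : ι → Type*}

noncomputable def sigmaEquivUpdate (R : ∀ i, β i → β i → Prop) (hR : ∀ i a, ¬R i a a)
    (x : ∀ i, β i) :
    (Σ i, {y // R i (x i) y}) ≃ {z : ∀ i, β i // ∃ i, R i (x i) (z i) ∧ ∀ j ≠ i, x j = z j} :=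
  Equiv.ofBijective (fun p => ⟨Function.update x p.1 p.2.1, p.1, by simpa using p.2.2,
      fun j hj => (Function.update_of_ne hj _ _).symm⟩) <| by
    refine ⟨fun ⟨i, y, hy⟩ ⟨i', y', hy'⟩ heq => ?_, fun ⟨z, i, hi, hz⟩ => ⟨⟨i, z i, hi⟩, ?_⟩⟩
    · have heq : Function.update x i y = Function.update x i' y' := congrArg Subtype.val heq
      obtain rfl : i = i' := by
        by_contra hne
        have := congrFun heq i
        rw [Function.update_self, Function.update_of_ne hne] at this
        exact hR i _ (this ▸ hy)
      obtain rfl : y = y' := by simpa using congrFun heq i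
      rfl
    · refine Subtype.ext (funext fun j => ?_)
      rcases eq_or_ne j i with rfl | hj
      · simp
      · simp [Function.update_of_ne hj, hz j hj]

variable [∀ i, PartialOrder (β i)] (x : ∀ i, β i)

noncomputable def sigmaUpperCoverEquiv : (Σ i, {y // x i ⋖ y}) ≃ {z // x ⋖ z} :=
  (sigmaEquivUpdate (fun _ a b => a ⋖ b) (fun _ _ h => h.lt.false) x).trans
    (Equiv.subtypeEquivRight fun _ => Pi.covBy_iff.symm)

noncomputable def sigmaLowerCoverEquiv : (Σ i, {y // y ⋖ x i}) ≃ {z // z ⋖ x} :=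
  (sigmaEquivUpdate (fun _ a b => b ⋖ a) (fun _ _ h => h.lt.false) x).trans
    (Equiv.subtypeEquivRight fun _ => by simp only [Pi.covBy_iff, eq_comm])

variable [Fintype ι]

theorem natCard_upperCover [∀ i, Finite {y // x i ⋖ y}] :
    Nat.card {z // x ⋖ z} = ∑ i, Nat.card {y // x i ⋖ y} := by
  rw [← Nat.card_sigma, Nat.card_congr (sigmaUpperCoverEquiv x)]

theorem natCard_lowerCover [∀ i, Finite {y // y ⋖ x i}] :
    Nat.card {z // z ⋖ x} = ∑ i, Nat.card {y // y ⋖ x i} := by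
  rw [← Nat.card_sigma, Nat.card_congr (sigmaLowerCoverEquiv x)]

end Pi

section Multipartition

variable (ι : Type*) [Fintype ι]

abbrev Multipartition (n : ℕ) := {x : ι → YoungDiagram // ∑ i, (x i).card = n}

variable {ι}

instance (n : ℕ) : Finite (Multipartition ι n) := by
  refine Finite.of_injective (β := ι → (Finset.range n ×ˢ Finset.range n).powerset)
    (fun x i => ⟨(x.1 i).cells, Finset.mem_powerset.2 fun c hc => ?_⟩) fun x y h => ?_
  · have hle : (x.1 i).card ≤ n := calc
      (x.1 i).card ≤ ∑ j, (x.1 j).card :=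
        Finset.single_le_sum (f := fun j => (x.1 j).card) (fun _ _ => Nat.zero_le _)
          (Finset.mem_univ i)
      _ = n := x.2
    have := YoungDiagram.lt_card_of_mem ((YoungDiagram.mem_cells _).1 hc)
    simp only [Finset.mem_product, Finset.mem_range]
    omega
  · exact Subtype.ext (funext fun i => YoungDiagram.ext (congrArg Subtype.val (congrFun h i)))

noncomputable instance (n : ℕ) : Fintype (Multipartition ι n) := .ofFinite _

instance : Subsingleton (Multipartition ι 0) := by
  refine ⟨fun x y => Subtype.ext (funext fun i => YoungDiagram.ext ?_)⟩
  have hzero (z : Multipartition ι 0) : (z.1 i).cells = ∅ :=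
    Finset.card_eq_zero.1 (Finset.sum_eq_zero_iff.1 z.2 i (Finset.mem_univ i))
  rw [hzero, hzero]

namespace Multipartition

variable {n : ℕ} {P : (ι → YoungDiagram) → Prop}

theorem sum_filter_eq [DecidablePred P] [Fintype {z // P z}]
    (hP : ∀ z, P z → ∑ i, (z i).card = n) (g : (ι → YoungDiagram) → ℕ) :
    ∑ z : Multipartition ι n with P z.1, g z.1 = ∑ z : {z // P z}, g z := by
  rw [Finset.sum_subtype (p := fun z : Multipartition ι n => P z.1) _ (by simp)]
  exact Fintype.sum_equiv (Equiv.subtypeSubtypeEquivSubtype (hP _)) _ _ fun _ => rfl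

theorem card_filter_eq [DecidablePred P] (hP : ∀ z, P z → ∑ i, (z i).card = n) :
    #{z : Multipartition ι n | P z.1} = Nat.card {z // P z} := by
  rw [← Fintype.card_subtype, ← Nat.card_eq_fintype_card]
  exact Nat.card_congr (Equiv.subtypeSubtypeEquivSubtype (hP _))

end Multipartition

variable [DecidableEq ι]

theorem natCard_covBy_eq_natCard_covBy_add_card (x : ι → YoungDiagram) :
    Nat.card {z // x ⋖ z} = Nat.card {y // y ⋖ x} + Fintype.card ι := by
  simp [natCard_upperCover, natCard_lowerCover,
    YoungDiagram.natCard_covBy_eq_natCard_covBy_add_one, Finset.sum_add_distrib]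

theorem sum_card_of_covBy {x z : ι → YoungDiagram} (h : x ⋖ z) :
    ∑ i, (z i).card = ∑ i, (x i).card + 1 := by
  obtain ⟨i, y, hy, rfl⟩ := Pi.covBy_iff_exists_right_eq.1 h
  rw [← add_sum_erase _ _ (mem_univ i), ← add_sum_erase _ _ (mem_univ i), Function.update_self,
    YoungDiagram.card_of_covBy hy,
    sum_congr rfl fun j hj => by rw [Function.update_of_ne (ne_of_mem_erase hj)]]
  ring

open Classical in
theorem natCard_covBy_and_covBy_eq (x w : ι → YoungDiagram) :
    Nat.card {z // x ⋖ z ∧ w ⋖ z} =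
      Nat.card {y // y ⋖ x ∧ y ⋖ w} + if x = w then Fintype.card ι else 0 := by
  split_ifs with h
  · simp only [h, and_self, natCard_covBy_eq_natCard_covBy_add_card]
  · rw [natCard_covBy_and_covBy_eq_of_ne h, add_zero]

theorem isDifferential_multipartition :
    IsDifferential (α := Multipartition ι) (fun _ x z => x.1 ⋖ z.1) (Fintype.card ι) where
  zero x w := by
    classical
    rw [Multipartition.card_filter_eq (P := fun z => x.1 ⋖ z ∧ w.1 ⋖ z)
        fun z hz => (sum_card_of_covBy hz.1).trans (by rw [x.2]),
      natCard_covBy_and_covBy_eq]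
    have : IsEmpty {y // y ⋖ x.1 ∧ y ⋖ w.1} :=
      ⟨fun y => by have := sum_card_of_covBy y.2.1; omega⟩
    rw [Nat.card_of_isEmpty, zero_add]
    simp only [Subtype.ext_iff]
  succ n x w := by
    classical
    rw [Multipartition.card_filter_eq (P := fun z => x.1 ⋖ z ∧ w.1 ⋖ z)
        fun z hz => (sum_card_of_covBy hz.1).trans (by rw [x.2]),
      Multipartition.card_filter_eq (P := fun y => y ⋖ x.1 ∧ y ⋖ w.1)
        fun y hy => by have := sum_card_of_covBy hy.1; omega,
      natCard_covBy_and_covBy_eq]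
    simp only [Subtype.ext_iff]

end Multipartition

/-- Natural labelings of `β` in Stanley's sense, with labels in `Fin n`. -/
abbrev NaturalLabeling (β : Type*) [Preorder β] (n : ℕ) := {e : Fin n ≃ β // StrictMono e.symm}

namespace NaturalLabeling

variable {β γ : Type*} {n : ℕ}

section RestrictLast

variable [DecidableEq β]

def restrictLast (p : β) :
    {e : Fin (n + 1) ≃ β // e (Fin.last n) = p} ≃ (Fin n ≃ {y // y ≠ p}) :=
  (Equiv.subtypeEquiv (finSuccEquivLast.equivCongr (.refl β)) fun e => by simp).trans
    (Equiv.optionSubtype p)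

theorem coe_restrictLast_apply {p : β} (e : {e : Fin (n + 1) ≃ β // e (Fin.last n) = p})
    (i : Fin n) : (restrictLast p e i : β) = e.1 i.castSucc := by
  simp [restrictLast]

theorem castSucc_restrictLast_symm {p : β} (e : {e : Fin (n + 1) ≃ β // e (Fin.last n) = p})
    (y : {y // y ≠ p}) : ((restrictLast p e).symm y).castSucc = e.1.symm y := by
  rw [Equiv.eq_symm_apply, ← coe_restrictLast_apply, Equiv.apply_symm_apply]

end RestrictLast

variable [Preorder β]

def congr [Preorder γ] (f : β ≃o γ) : NaturalLabeling β n ≃ NaturalLabeling γ n :=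
  Equiv.subtypeEquiv (Equiv.equivCongr (.refl _) f.toEquiv) fun e =>
    ⟨fun he => he.comp f.symm.strictMono, fun he => by
      simpa [Function.comp_def] using he.comp f.strictMono⟩

theorem natCard_zero [IsEmpty β] : Nat.card (NaturalLabeling β 0) = 1 :=
  Nat.card_eq_one_iff_unique.2 ⟨⟨fun _ _ => Subtype.ext (Equiv.ext finZeroElim)⟩,
    ⟨⟨Equiv.equivOfIsEmpty _ _, fun a => isEmptyElim a⟩⟩⟩

theorem isMax_last (e : NaturalLabeling β (n + 1)) : IsMax (e.1 (Fin.last n)) := by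
  intro q hq
  by_contra hlt
  have := e.2 (lt_of_le_not_ge hq hlt)
  rw [Equiv.symm_apply_apply] at this
  exact (Fin.le_last _).not_gt this

theorem strictMono_restrictLast_symm_iff [DecidableEq β] {p : β} (hp : IsMax p)
    (e : {e : Fin (n + 1) ≃ β // e (Fin.last n) = p}) :
    StrictMono (restrictLast p e).symm ↔ StrictMono e.1.symm := by
  have key := castSucc_restrictLast_symm e
  refine ⟨fun h y y' hyy' => ?_, fun h y y' hyy' => ?_⟩
  · have hy : y ≠ p := by rintro rfl; exact hp.not_lt hyy'
    by_cases hy' : y' = p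
    · rw [hy', e.1.symm_apply_eq.2 e.2.symm, ← key ⟨y, hy⟩]
      exact Fin.castSucc_lt_last _
    · rw [← key ⟨y, hy⟩, ← key ⟨y', hy'⟩, Fin.castSucc_lt_castSucc_iff]
      exact h hyy'
  · rw [← Fin.castSucc_lt_castSucc_iff, key, key]
    exact h hyy'

def fiberEquiv [DecidableEq β] (p : β) (hp : IsMax p) :
    {e : NaturalLabeling β (n + 1) // e.1 (Fin.last n) = p} ≃ NaturalLabeling {y // y ≠ p} n :=
  (Equiv.subtypeSubtypeEquivSubtypeInter _ _).trans <|
    (Equiv.subtypeEquivRight fun _ => and_comm).trans <|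
    (Equiv.subtypeSubtypeEquivSubtypeInter _ _).symm.trans <|
    Equiv.subtypeEquiv (restrictLast p) fun e => (strictMono_restrictLast_symm_iff hp e).symm

open Classical in
theorem natCard_succ [Fintype β] :
    Nat.card (NaturalLabeling β (n + 1)) =
      ∑ p : {p : β // IsMax p}, Nat.card (NaturalLabeling {y // y ≠ p.1} n) := by
  rw [← Nat.card_congr (Equiv.sigmaFiberEquiv fun e : NaturalLabeling β (n + 1) =>
    (⟨e.1 (Fin.last n), isMax_last e⟩ : {p : β // IsMax p})), Nat.card_sigma]
  refine Finset.sum_congr rfl fun p _ => Nat.card_congr ?_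
  exact (Equiv.subtypeEquivRight fun _ => Subtype.ext_iff).trans (fiberEquiv p.1 p.2)

end NaturalLabeling

section Cells

variable {ι : Type*}

abbrev Cells (x : ι → YoungDiagram) := (i : ι) × {c : ℕ × ℕ // c ∈ x i}

instance (μ : YoungDiagram) : Fintype {c : ℕ × ℕ // c ∈ μ} :=
  Fintype.subtype μ.cells fun _ => μ.mem_cells _

theorem Cells.le_iff {x : ι → YoungDiagram} {q q' : Cells x} :
    q ≤ q' ↔ q.1 = q'.1 ∧ q.2.1 ≤ q'.2.1 := by
  obtain ⟨i, c⟩ := q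
  obtain ⟨i', c'⟩ := q'
  constructor
  · rintro ⟨_, _, _, h⟩
    exact ⟨rfl, h⟩
  · rintro ⟨rfl, h⟩
    exact Sigma.mk_le_mk_iff.2 h

theorem isStandard_iff_strictMono {b n : ℕ} {lam : Fin b → YoungDiagram}
    (T : MPTableau b n lam) : IsStandard T ↔ StrictMono T.symm := by
  refine ⟨fun h => ?_, fun h j c c' h₁ h₂ hne => ?_⟩
  · rintro _ _ ⟨j, c, c', hlt⟩
    exact h j c c' hlt.le.1 hlt.le.2 hlt.ne
  · exact h (Sigma.mk_lt_mk_iff.2 (lt_of_le_of_ne ⟨h₁, h₂⟩ hne))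

theorem isMax_cells_iff {x : ι → YoungDiagram} {i : ι} {c : {c : ℕ × ℕ // c ∈ x i}} :
    IsMax (⟨i, c⟩ : Cells x) ↔ Maximal (· ∈ x i) c.1 := by
  refine ⟨fun h => ⟨c.2, fun d hd hcd => ?_⟩, fun h => ?_⟩
  · have hle : (⟨i, c⟩ : Cells x) ≤ ⟨i, d, hd⟩ := Cells.le_iff.2 ⟨rfl, hcd⟩
    exact (Cells.le_iff.1 (h hle)).2
  rintro ⟨j, d⟩ hle
  obtain ⟨rfl, hcd⟩ := Cells.le_iff.1 hle
  exact Cells.le_iff.2 ⟨rfl, h.2 d.2 hcd⟩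

def Cells.isMaxEquiv {x : ι → YoungDiagram} :
    {p : Cells x // IsMax p} ≃ Σ i, {c // Maximal (· ∈ x i) c} where
  toFun p := ⟨p.1.1, p.1.2.1, isMax_cells_iff.1 p.2⟩
  invFun q := ⟨⟨q.1, q.2.1, q.2.2.1⟩, isMax_cells_iff.2 q.2.2⟩
  left_inv _ := rfl
  right_inv _ := rfl

end Cells

section Branching

variable {ι : Type*} [DecidableEq ι] {x : ι → YoungDiagram}

theorem mem_update_eraseCell {i j : ι} {c d : ℕ × ℕ} {h : Maximal (· ∈ x i) c} :
    d ∈ Function.update x i ((x i).eraseCell c h) j ↔ d ∈ x j ∧ ¬(j = i ∧ d = c) := by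
  rcases eq_or_ne j i with rfl | hj
  · simp [and_comm]
  · simp [hj]

def eraseOrderIso {i : ι} {c : ℕ × ℕ} (h : Maximal (· ∈ x i) c) :
    {q : Cells x // q ≠ ⟨i, c, h.1⟩} ≃o Cells (Function.update x i ((x i).eraseCell c h)) where
  toFun q := ⟨q.1.1, q.1.2.1, mem_update_eraseCell.2 ⟨q.1.2.2, by
    obtain ⟨⟨j, d, hd⟩, hq⟩ := q
    rintro ⟨hj, hdc⟩
    dsimp only at hj hdc
    subst hj hdc
    exact hq rfl⟩⟩
  invFun q := ⟨⟨q.1, q.2.1, (mem_update_eraseCell.1 q.2.2).1⟩, by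
    intro hq
    exact (mem_update_eraseCell.1 q.2.2).2 ⟨congrArg Sigma.fst hq, congrArg (·.2.1) hq⟩⟩
  left_inv _ := rfl
  right_inv _ := rfl
  map_rel_iff' := by
    intro q q'
    simp only [Equiv.coe_fn_mk, Cells.le_iff, ← Subtype.coe_le_coe]

noncomputable def isMaxEquivCovBy : {p : Cells x // IsMax p} ≃ {z // z ⋖ x} :=
  Cells.isMaxEquiv.trans <|
    (Equiv.sigmaCongrRight fun i => (x i).eraseCellEquiv).trans (sigmaLowerCoverEquiv x)

instance [Finite ι] : Finite {z // z ⋖ x} := .of_equiv _ (sigmaLowerCoverEquiv x)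

noncomputable instance [Finite ι] : Fintype {z // z ⋖ x} := .ofFinite _

theorem natCard_naturalLabeling_cells_succ [Fintype ι] (n : ℕ) :
    Nat.card (NaturalLabeling (Cells x) (n + 1)) =
      ∑ z : {z // z ⋖ x}, Nat.card (NaturalLabeling (Cells z.1) n) := by
  classical
  rw [NaturalLabeling.natCard_succ]
  exact Fintype.sum_equiv isMaxEquivCovBy _ _ fun ⟨⟨_, _⟩, hp⟩ =>
    Nat.card_congr (NaturalLabeling.congr (eraseOrderIso (isMax_cells_iff.1 hp)))

end Branching

section Counting

variable {ι : Type*} [Fintype ι] [DecidableEq ι]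

open Classical in
theorem Multipartition.natCard_naturalLabeling_succ {n : ℕ} (z : Multipartition ι (n + 1)) :
    Nat.card (NaturalLabeling (Cells z.1) (n + 1)) =
      ∑ w : Multipartition ι n with w.1 ⋖ z.1, Nat.card (NaturalLabeling (Cells w.1) n) := by
  rw [natCard_naturalLabeling_cells_succ]
  exact (Multipartition.sum_filter_eq (fun w hw => by have := sum_card_of_covBy hw; omega)
    fun w => Nat.card (NaturalLabeling (Cells w) n)).symm

theorem Multipartition.sum_natCard_naturalLabeling_sq (n : ℕ) :
    ∑ x : Multipartition ι n, Nat.card (NaturalLabeling (Cells x.1) n) ^ 2 =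
      Fintype.card ι ^ n * n.factorial := by
  classical
  rw [isDifferential_multipartition.sum_sq_eq
      (e := fun n x => Nat.card (NaturalLabeling (Cells x.1) n))
      (fun _ z => Multipartition.natCard_naturalLabeling_succ z) n,
    Fintype.sum_subsingleton _ ⟨fun _ => ⊥, by simp⟩]
  have : IsEmpty (Cells fun _ : ι => (⊥ : YoungDiagram)) :=
    ⟨fun q => YoungDiagram.notMem_bot _ q.2.2⟩
  rw [NaturalLabeling.natCard_zero, one_pow, mul_one]

end Counting

theorem stmt10_general (b n : ℕ) :
    Nat.card (Σ lam : {lam : Fin b → YoungDiagram // ∑ j, (lam j).card = n},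
        {T : MPTableau b n lam.1 // IsStandard T} × {T : MPTableau b n lam.1 // IsStandard T}) =
      b ^ n * n.factorial := by
  have standardEquiv (lam : Fin b → YoungDiagram) :
      {T : MPTableau b n lam // IsStandard T} ≃ NaturalLabeling (Cells lam) n :=
    Equiv.subtypeEquivRight isStandard_iff_strictMono
  rw [Nat.card_sigma]
  simp_rw [Nat.card_prod, Nat.card_congr (standardEquiv _), ← sq]
  simpa using Multipartition.sum_natCard_naturalLabeling_sq (ι := Fin b) n

/-- The sum over all b-multipartitions λ of n of the square of the number
of standard Young b-tableaux of shape λ equals bⁿ·n!  (stated as the cardinality of the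
total space of pairs of standard b-tableaux of a common shape of total size n). -/
theorem stmt10 (b n : ℕ) (hb : 0 < b) :
    Nat.card (Σ lam : {lam : Fin b → YoungDiagram // ∑ j, (lam j).card = n},
        {T : MPTableau b n lam.1 // IsStandard T} × {T : MPTableau b n lam.1 // IsStandard T}) =
      b ^ n * n.factorial :=
  stmt10_general b n
end
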